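/- Let W ∈ R^{d×m}, E ∈ R^{d×m}, and let V_proj = VVᵀ and V̂_proj = V̂V̂ᵀ be two orthogonal projections on R^m with V_proj = V̂_proj + F. Write Y* = W V_proj and Ŷ = (W+E) V̂_proj, with columns Y*_i, Ŷ_i. If ||Ŷ_i||₂ ≥ 1/π and ||Y*_i||₂ > 0, then 1 − cos(Θ(Y*_i, Ŷ_i)) ≤ (1 − s_i) + π(||F_i||₂||W||₂ + ||E||_F), where s_i = ||Y*_i||₂ / (||Y*_i||₂ + ||W||₂||F_i||₂ + ||E||_F + ||E||_F||F_i||₂) and F_i is the i-th column of F. -/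

import Mathlib

open Matrix

/-- Spectral norm (ℓ2 operator norm) of a real matrix. -/
noncomputable def specNorm {d m : ℕ} (W : Matrix (Fin d) (Fin m) ℝ) : ℝ :=
  ‖LinearMap.toContinuousLinearMap (Matrix.toEuclideanLin W)‖

/-- Frobenius norm of a matrix. -/
noncomputable def frobNorm {d m : ℕ} (A : Matrix (Fin d) (Fin m) ℝ) : ℝ :=
  Real.sqrt (Matrix.trace (Aᵀ * A))

/-- Euclidean norm of the i-th column of a matrix. -/
noncomputable def colNorm {d m : ℕ} (A : Matrix (Fin d) (Fin m) ℝ) (i : Fin m) : ℝ :=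
  Real.sqrt (∑ j, (A j i) ^ 2)

/-!
Write `a = Y*_i` and `b = Ŷ_i`. Since `P = P̂ + F`, we have `b - a = E P̂_i - W F_i`, and the
columns of an orthogonal projection have norm at most one, so `‖b - a‖ ≤ D := ‖W‖₂‖F_i‖ + ‖E‖_F`.
Cauchy–Schwarz gives `⟨a, b⟩ ≥ ‖a‖ (‖a‖ - D)`, i.e. `cos Θ ≥ (‖a‖ - D) / ‖b‖`, while
`‖b‖ ≤ ‖a‖ + D ≤ t`, the denominator of `s_i`. What remains is the scalar inequality
`‖a‖ / t ≤ (‖a‖ - D) / ‖b‖ + π D`, which only needs `1 ≤ π ‖b‖`.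
-/

open RealInnerProductSpace

theorem div_le_sub_div_add_mul {x y t c D : ℝ} (hx : 0 ≤ x) (hD : 0 ≤ D) (hy₀ : 0 ≤ y)
    (hyt : y ≤ t) (hcy : 1 ≤ c * y) : x / t ≤ (x - D) / y + c * D := by
  have hy : 0 < y := hy₀.lt_of_ne (by rintro rfl; simp at hcy; linarith)
  have ht : 0 < t := hy.trans_le hyt
  have hct : 1 ≤ c * t := hcy.trans (by nlinarith)
  rcases le_or_gt D x with hDx | hxD
  · have h1 : (x - D) / t ≤ (x - D) / y := div_le_div_of_nonneg_left (by linarith) hy hyt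
    have h2 : D / t ≤ c * D := by rw [div_le_iff₀ ht]; nlinarith
    calc x / t = (x - D) / t + D / t := by ring
      _ ≤ (x - D) / y + c * D := add_le_add h1 h2
  · have h1 : x / t ≤ c * x := by rw [div_le_iff₀ ht]; nlinarith
    have h2 : c * (x - D) ≤ (x - D) / y := by rw [le_div_iff₀ hy]; nlinarith
    linarith

section InnerProduct

variable {V : Type*} [NormedAddCommGroup V] [InnerProductSpace ℝ V]

theorem sub_norm_sub_div_le_inner_div (a b : V) :
    (‖a‖ - ‖b - a‖) / ‖b‖ ≤ ⟪a, b⟫ / (‖a‖ * ‖b‖) := by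
  rcases eq_or_ne a 0 with rfl | ha
  · simp [div_nonpos_iff]
  rcases eq_or_ne b 0 with rfl | hb
  · simp
  have ha' : 0 < ‖a‖ := norm_pos_iff.mpr ha
  have hb' : 0 < ‖b‖ := norm_pos_iff.mpr hb
  have hinner : ‖a‖ * (‖a‖ - ‖b - a‖) ≤ ⟪a, b⟫ := by
    have hcs : -(‖a‖ * ‖b - a‖) ≤ ⟪a, b - a⟫ := neg_le_of_abs_le (abs_real_inner_le_norm a _)
    rw [inner_sub_right, real_inner_self_eq_norm_sq] at hcs
    nlinarith
  rw [div_le_div_iff₀ hb' (by positivity)]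
  nlinarith

theorem one_sub_inner_div_le_of_norm_sub_le {a b : V} {c D t : ℝ} (hab : ‖b - a‖ ≤ D)
    (hcb : 1 ≤ c * ‖b‖) (ht : ‖a‖ + D ≤ t) :
    1 - ⟪a, b⟫ / (‖a‖ * ‖b‖) ≤ (1 - ‖a‖ / t) + c * D := by
  have hD : 0 ≤ D := (norm_nonneg _).trans hab
  have hbt : ‖b‖ ≤ t := by
    have := norm_le_norm_add_norm_sub' b a
    linarith [norm_sub_rev a b]
  have hcos : (‖a‖ - D) / ‖b‖ ≤ ⟪a, b⟫ / (‖a‖ * ‖b‖) :=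
    (div_le_div_of_nonneg_right (by linarith) (norm_nonneg b)).trans
      (sub_norm_sub_div_le_inner_div a b)
  linarith [div_le_sub_div_add_mul (norm_nonneg a) hD (norm_nonneg b) hbt hcb]

end InnerProduct

section Columns

variable {d m n : ℕ}

noncomputable def euclideanCol (A : Matrix (Fin d) (Fin m) ℝ) (i : Fin m) :
    EuclideanSpace ℝ (Fin d) :=
  WithLp.toLp 2 fun j => A j i

theorem euclideanCol_sub (A B : Matrix (Fin d) (Fin m) ℝ) (i : Fin m) :
    euclideanCol (A - B) i = euclideanCol A i - euclideanCol B i := rfl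

theorem euclideanCol_mul (A : Matrix (Fin d) (Fin m) ℝ) (B : Matrix (Fin m) (Fin n) ℝ)
    (i : Fin n) : euclideanCol (A * B) i = toEuclideanLin A (euclideanCol B i) := by
  ext j
  simp [euclideanCol, mul_apply, mulVec, dotProduct]

theorem colNorm_nonneg (A : Matrix (Fin d) (Fin m) ℝ) (i : Fin m) : 0 ≤ colNorm A i :=
  Real.sqrt_nonneg _

theorem frobNorm_nonneg (A : Matrix (Fin d) (Fin m) ℝ) : 0 ≤ frobNorm A :=
  Real.sqrt_nonneg _

theorem colNorm_eq_norm_euclideanCol (A : Matrix (Fin d) (Fin m) ℝ) (i : Fin m) :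
    colNorm A i = ‖euclideanCol A i‖ := by
  simp [colNorm, euclideanCol, EuclideanSpace.norm_eq]

theorem sum_mul_eq_inner_euclideanCol (A B : Matrix (Fin d) (Fin m) ℝ) (i : Fin m) :
    ∑ j, A j i * B j i = ⟪euclideanCol A i, euclideanCol B i⟫ := by
  simp [euclideanCol, PiLp.inner_apply, mul_comm]

theorem colNorm_sub_le (A B : Matrix (Fin d) (Fin m) ℝ) (i : Fin m) :
    colNorm (A - B) i ≤ colNorm A i + colNorm B i := by
  simp only [colNorm_eq_norm_euclideanCol, euclideanCol_sub]
  exact norm_sub_le _ _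

theorem colNorm_mul_le_specNorm_mul (W : Matrix (Fin d) (Fin m) ℝ)
    (F : Matrix (Fin m) (Fin n) ℝ) (i : Fin n) :
    colNorm (W * F) i ≤ specNorm W * colNorm F i := by
  simp only [colNorm_eq_norm_euclideanCol, euclideanCol_mul]
  exact (LinearMap.toContinuousLinearMap (toEuclideanLin W)).le_opNorm _

theorem frobNorm_eq_sqrt_sum_sq (E : Matrix (Fin d) (Fin m) ℝ) :
    frobNorm E = Real.sqrt (∑ k, ∑ j, (E j k) ^ 2) := by
  simp [frobNorm, trace, mul_apply, sq]

theorem colNorm_mul_le_frobNorm_mul (E : Matrix (Fin d) (Fin m) ℝ)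
    (P : Matrix (Fin m) (Fin n) ℝ) (i : Fin n) :
    colNorm (E * P) i ≤ frobNorm E * colNorm P i := by
  rw [frobNorm_eq_sqrt_sum_sq, colNorm, colNorm, ← Real.sqrt_mul (by positivity)]
  refine Real.sqrt_le_sqrt ?_
  calc ∑ j, ((E * P) j i) ^ 2
      ≤ ∑ j, (∑ l, (E j l) ^ 2) * (∑ l, (P l i) ^ 2) :=
        Finset.sum_le_sum fun j _ => by
          rw [mul_apply]; exact Finset.sum_mul_sq_le_sq_mul_sq _ _ _
    _ = (∑ k, ∑ j, (E j k) ^ 2) * ∑ j, (P j i) ^ 2 := by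
        rw [← Finset.sum_mul, Finset.sum_comm]

theorem colNorm_le_one_of_isSymm_of_isIdempotentElem {P : Matrix (Fin m) (Fin m) ℝ}
    (hP : P.IsSymm) (hP2 : IsIdempotentElem P) (i : Fin m) : colNorm P i ≤ 1 := by
  have hdiag : ∑ j, (P j i) ^ 2 = P i i := by
    conv_rhs => rw [← hP2.eq, mul_apply]
    refine Finset.sum_congr rfl fun j _ => ?_
    rw [sq, ← hP.apply i j]
  have hle : (P i i) ^ 2 ≤ P i i :=
    hdiag ▸ Finset.single_le_sum (f := fun j => (P j i) ^ 2) (fun j _ => sq_nonneg _)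
      (Finset.mem_univ i)
  rw [colNorm, hdiag]
  exact Real.sqrt_le_one.mpr (by nlinarith)

end Columns

theorem stmt16_general (d m : ℕ) (W E : Matrix (Fin d) (Fin m) ℝ)
    (Pr Prhat : Matrix (Fin m) (Fin m) ℝ)
    (hPrhat : Prhatᵀ = Prhat) (hPrhat2 : Prhat * Prhat = Prhat)
    (F : Matrix (Fin m) (Fin m) ℝ) (hF : Pr = Prhat + F)
    (Ystar Yhat : Matrix (Fin d) (Fin m) ℝ)
    (hYstar : Ystar = W * Pr) (hYhat : Yhat = (W + E) * Prhat)
    (i : Fin m)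
    (hYhatlb : 1 / Real.pi ≤ colNorm Yhat i) :
    1 - (∑ j, Ystar j i * Yhat j i) / (colNorm Ystar i * colNorm Yhat i)
      ≤ (1 - colNorm Ystar i /
            (colNorm Ystar i + specNorm W * colNorm F i + frobNorm E
              + frobNorm E * colNorm F i))
        + Real.pi * (colNorm F i * specNorm W + frobNorm E) := by
  have hdiff : Yhat - Ystar = E * Prhat - W * F := by
    rw [hYhat, hYstar, hF, Matrix.add_mul, Matrix.mul_add]; abel
  have hpert : colNorm (Yhat - Ystar) i ≤ colNorm F i * specNorm W + frobNorm E := by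
    have hP := colNorm_le_one_of_isSymm_of_isIdempotentElem hPrhat hPrhat2 i
    calc colNorm (Yhat - Ystar) i ≤ colNorm (E * Prhat) i + colNorm (W * F) i :=
          hdiff ▸ colNorm_sub_le _ _ i
      _ ≤ frobNorm E * colNorm Prhat i + specNorm W * colNorm F i :=
          add_le_add (colNorm_mul_le_frobNorm_mul E Prhat i) (colNorm_mul_le_specNorm_mul W F i)
      _ ≤ colNorm F i * specNorm W + frobNorm E := by
          nlinarith [frobNorm_nonneg E]
  have hpi : 1 ≤ Real.pi * colNorm Yhat i := by
    rwa [← div_le_iff₀' Real.pi_pos]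
  have ht : colNorm Ystar i + (colNorm F i * specNorm W + frobNorm E) ≤
      colNorm Ystar i + specNorm W * colNorm F i + frobNorm E + frobNorm E * colNorm F i := by
    linarith [mul_nonneg (frobNorm_nonneg E) (colNorm_nonneg F i)]
  simp only [colNorm_eq_norm_euclideanCol, euclideanCol_sub, sum_mul_eq_inner_euclideanCol]
    at hpert hpi ht ⊢
  exact one_sub_inner_div_le_of_norm_sub_le hpert hpi ht

/-- Perturbation bound: with orthogonal projections P = P̂ + F,
Y* = WP, Ŷ = (W+E)P̂, if ‖Ŷ_i‖ ≥ 1/π and ‖Y*_i‖ > 0, then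
1 − cos Θ(Y*_i, Ŷ_i) ≤ (1 − s_i) + π(‖F_i‖₂‖W‖₂ + ‖E‖_F), where
s_i = ‖Y*_i‖/(‖Y*_i‖ + ‖W‖₂‖F_i‖₂ + ‖E‖_F + ‖E‖_F‖F_i‖₂). -/
theorem stmt16 (d m : ℕ) (W E : Matrix (Fin d) (Fin m) ℝ)
    (Pr Prhat : Matrix (Fin m) (Fin m) ℝ)
    (hPr : Prᵀ = Pr) (hPr2 : Pr * Pr = Pr)
    (hPrhat : Prhatᵀ = Prhat) (hPrhat2 : Prhat * Prhat = Prhat)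
    (F : Matrix (Fin m) (Fin m) ℝ) (hF : Pr = Prhat + F)
    (Ystar Yhat : Matrix (Fin d) (Fin m) ℝ)
    (hYstar : Ystar = W * Pr) (hYhat : Yhat = (W + E) * Prhat)
    (i : Fin m)
    (hYhatlb : 1 / Real.pi ≤ colNorm Yhat i) (hYstarpos : 0 < colNorm Ystar i) :
    1 - (∑ j, Ystar j i * Yhat j i) / (colNorm Ystar i * colNorm Yhat i)
      ≤ (1 - colNorm Ystar i /
            (colNorm Ystar i + specNorm W * colNorm F i + frobNorm E
              + frobNorm E * colNorm F i))
        + Real.pi * (colNorm F i * specNorm W + frobNorm E) :=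
  stmt16_general d m W E Pr Prhat hPrhat hPrhat2 F hF Ystar Yhat hYstar hYhat i hYhatlb
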